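/- Let N ≥ 1 and let α, β be real numbers such that α², β², αβ are linearly independent over ℚ (equivalently, mα² + nβ² + pαβ = 0 with m, n, p ∈ ℤ forces m = n = p = 0). Let x, x' ∈ {α, β}^N with S_α(x) = {i : x[i] = α}, S_β(x) = {j : x[j] = β}, and similarly for x'. If a_x = a_{x'}, then the ordered partitions (S_α(x), S_β(x)) and (S_α(x'), S_β(x')) of [0,N-1] are homometric. -/

import Mathlib

/-- The cyclic distance `d(i,j) = min(|i-j|, N-|i-j|)` on `ZMod N`. -/
def cdist {N : ℕ} (i j : ZMod N) : ℕ := min (i - j).val (j - i).val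

/-- The cyclic difference multiset `A - B = {d(i,j) : i ∈ A, j ∈ B}`. -/
def diffMS {N : ℕ} (A B : Finset (ZMod N)) : Multiset ℕ :=
  (A ×ˢ B).val.map fun p => cdist p.1 p.2

/-- The self difference multiset `A - A = {d(i,j) : i ≤ j ∈ A}`. -/
def selfDiffMS {N : ℕ} (A : Finset (ZMod N)) : Multiset ℕ :=
  ((A ×ˢ A).filter fun p => p.1.val ≤ p.2.val).val.map fun p => cdist p.1 p.2

/-- Two subsets are homometric if they have the same self difference multiset. -/
def Homometric {N : ℕ} (A B : Finset (ZMod N)) : Prop :=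
  selfDiffMS A = selfDiffMS B

/-- `σ : ZMod N → ZMod N` is given by the action of an element of the dihedral
group `D_{2N}`, generated by the rotation `i ↦ i + 1` and the reflection `i ↦ -i`. -/
def IsDihedral {N : ℕ} (σ : ZMod N → ZMod N) : Prop :=
  (∃ k : ZMod N, ∀ i, σ i = i + k) ∨ (∃ k : ZMod N, ∀ i, σ i = -i + k)

/-- Two subsets are equivalent if one is the image of the other under `D_{2N}`. -/
def EquivSets {N : ℕ} (A B : Finset (ZMod N)) : Prop :=
  ∃ σ : ZMod N → ZMod N, IsDihedral σ ∧ B = A.image σ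

/-- An ordered partition of `[0, N-1]`: pairwise disjoint sets covering everything. -/
def IsPartitionOf {N K : ℕ} [NeZero N] (A : Fin K → Finset (ZMod N)) : Prop :=
  (∀ i j, i ≠ j → Disjoint (A i) (A j)) ∧ Finset.univ.biUnion A = Finset.univ

/-- Two ordered partitions are homometric if `A i - A j = B i - B j` for all pairs. -/
def HomometricPart {N K : ℕ} (A B : Fin K → Finset (ZMod N)) : Prop :=
  ∀ i j, diffMS (A i) (A j) = diffMS (B i) (B j)

/-- Two ordered partitions are equivalent if a single dihedral element maps one to the other. -/
def EquivPart {N K : ℕ} (A B : Fin K → Finset (ZMod N)) : Prop :=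
  ∃ σ : ZMod N → ZMod N, IsDihedral σ ∧ ∀ i, B i = (A i).image σ

/-- Two ordered partitions are pseudo-equivalent if each part is mapped by some
(possibly different) dihedral element. -/
def PseudoEquivPart {N K : ℕ} (A B : Fin K → Finset (ZMod N)) : Prop :=
  ∀ i, ∃ σ : ZMod N → ZMod N, IsDihedral σ ∧ B i = (A i).image σ

/-- The periodic autocorrelation `a_x[ℓ] = ∑ x[n] x[n+ℓ]`. -/
noncomputable def autocorr {N : ℕ} [NeZero N] (x : ZMod N → ℝ) (ℓ : ZMod N) : ℝ :=
  ∑ n : ZMod N, x n * x (n + ℓ)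

open Classical in
/-- The level set `{i : x[i] = a}` of a signal. -/
noncomputable def levelSet {N : ℕ} [NeZero N] (x : ZMod N → ℝ) (a : ℝ) : Finset (ZMod N) :=
  Finset.univ.filter fun i => x i = a

/-!
With `c_{ab}(ℓ) = #{n | x[n] = a, x[n+ℓ] = b}`, a two-valued signal has
`a_x[ℓ] = c_{αα}(ℓ) α² + c_{ββ}(ℓ) β² + (c_{αβ}(ℓ) + c_{βα}(ℓ)) αβ`, so for generic `α, β`
the autocorrelation determines `c_{αα}`, `c_{ββ}` and `c_{αβ} + c_{βα}` shift by shift.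
The multiplicity of `d` in `A - B` is the sum of the shift counts of `(A, B)` over the shifts
`ℓ` with `d(0, ℓ) = d`; as `A - B = B - A`, the symmetrized count `c_{αβ} + c_{βα}` already
determines `S_α - S_β`.
-/

open Finset

def shiftCount {N : ℕ} (A B : Finset (ZMod N)) (ℓ : ZMod N) : ℕ :=
  #{n ∈ A | n + ℓ ∈ B}

lemma cdist_comm {N : ℕ} (i j : ZMod N) : cdist i j = cdist j i :=
  min_comm _ _

lemma cdist_eq_cdist_zero_sub {N : ℕ} (i j : ZMod N) : cdist i j = cdist 0 (j - i) := by
  simp [cdist]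

lemma diffMS_comm {N : ℕ} (A B : Finset (ZMod N)) : diffMS A B = diffMS B A := by
  rw [diffMS, ← map_swap_product, map_val, Multiset.map_map]
  exact Multiset.map_congr rfl fun p _ => cdist_comm _ _

lemma count_diffMS {N : ℕ} [NeZero N] (A B : Finset (ZMod N)) (d : ℕ) :
    (diffMS A B).count d = ∑ ℓ with cdist 0 ℓ = d, shiftCount A B ℓ := by
  rw [diffMS, Multiset.count_map, ← filter_val, card_val,
    card_eq_sum_card_fiberwise (f := fun p => p.2 - p.1) (t := {ℓ | cdist 0 ℓ = d})]
  · refine sum_congr rfl fun ℓ hℓ => card_nbij' Prod.fst (fun n => (n, n + ℓ)) ?_ ?_ ?_ ?_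
    · rintro ⟨m, n⟩ hmn
      simp only [mem_coe, mem_filter, mem_product] at hmn
      obtain ⟨⟨⟨hm, hn⟩, -⟩, rfl⟩ := hmn
      simpa [shiftCount] using ⟨hm, hn⟩
    · intro n hn
      simp_all [cdist_eq_cdist_zero_sub n]
    · rintro ⟨m, n⟩ hmn
      simp only [mem_coe, mem_filter, mem_product] at hmn
      obtain ⟨-, rfl⟩ := hmn
      simp
    · intro n _
      rfl
  · rintro ⟨m, n⟩ hmn
    simp_all [cdist_eq_cdist_zero_sub m]

lemma diffMS_eq_of_shiftCount_add_eq {N : ℕ} [NeZero N] {A B A' B' : Finset (ZMod N)}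
    (h : ∀ ℓ, shiftCount A B ℓ + shiftCount B A ℓ = shiftCount A' B' ℓ + shiftCount B' A' ℓ) :
    diffMS A B = diffMS A' B' := by
  ext d
  have two_mul_count (A B : Finset (ZMod N)) : 2 * (diffMS A B).count d =
      ∑ ℓ with cdist 0 ℓ = d, (shiftCount A B ℓ + shiftCount B A ℓ) := by
    rw [sum_add_distrib, ← count_diffMS, ← count_diffMS, diffMS_comm B A, two_mul]
  have := two_mul_count A B
  rw [sum_congr rfl fun ℓ _ => h ℓ, ← two_mul_count] at this
  omega

lemma shiftCount_levelSet {N : ℕ} [NeZero N] (x : ZMod N → ℝ) (a b : ℝ) (ℓ : ZMod N) :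
    (shiftCount (levelSet x a) (levelSet x b) ℓ : ℝ) =
      ∑ n, if x n = a ∧ x (n + ℓ) = b then 1 else 0 := by
  simp [shiftCount, levelSet, filter_filter, sum_boole]

lemma autocorr_eq_of_two_valued {N : ℕ} [NeZero N] {α β : ℝ} (hne : α ≠ β)
    {x : ZMod N → ℝ} (hx : ∀ n, x n = α ∨ x n = β) (ℓ : ZMod N) :
    autocorr x ℓ = shiftCount (levelSet x α) (levelSet x α) ℓ * α ^ 2
      + shiftCount (levelSet x β) (levelSet x β) ℓ * β ^ 2
      + (shiftCount (levelSet x α) (levelSet x β) ℓ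
          + shiftCount (levelSet x β) (levelSet x α) ℓ : ℕ) * (α * β) := by
  push_cast
  simp only [shiftCount_levelSet, autocorr, sum_mul, ← sum_add_distrib]
  refine sum_congr rfl fun n _ => ?_
  rcases hx n with h₁ | h₁ <;> rcases hx (n + ℓ) with h₂ | h₂ <;>
    simp [h₁, h₂, hne, hne.symm] <;> ring

lemma natCoeffs_eq_of_intIndependent {u v w : ℝ}
    (hind : ∀ m n p : ℤ, (m : ℝ) * u + (n : ℝ) * v + (p : ℝ) * w = 0 → m = 0 ∧ n = 0 ∧ p = 0)
    {m n p m' n' p' : ℕ} (h : (m : ℝ) * u + n * v + p * w = m' * u + n' * v + p' * w) :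
    m = m' ∧ n = n' ∧ p = p' := by
  obtain ⟨hm, hn, hp⟩ := hind (m - m') (n - n') (p - p') (by push_cast; linarith)
  omega

/-- for generic `α, β`, equal autocorrelations imply homometric
level-set partitions. -/
theorem autocorr_implies_homometric_partition (N : ℕ) [NeZero N] (α β : ℝ)
    (hgen : ∀ m n p : ℤ,
      (m : ℝ) * α ^ 2 + (n : ℝ) * β ^ 2 + (p : ℝ) * (α * β) = 0 → m = 0 ∧ n = 0 ∧ p = 0)
    (x x' : ZMod N → ℝ)
    (hx : ∀ n, x n = α ∨ x n = β) (hx' : ∀ n, x' n = α ∨ x' n = β)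
    (h : autocorr x = autocorr x') :
    HomometricPart ![levelSet x α, levelSet x β] ![levelSet x' α, levelSet x' β] := by
  have hne : α ≠ β := by
    rintro rfl
    simpa using hgen 1 0 (-1) (by push_cast; ring)
  intro i j
  apply diffMS_eq_of_shiftCount_add_eq
  intro ℓ
  have hℓ := congrFun h ℓ
  rw [autocorr_eq_of_two_valued hne hx, autocorr_eq_of_two_valued hne hx'] at hℓ
  obtain ⟨hαα, hββ, hαβ⟩ := natCoeffs_eq_of_intIndependent hgen hℓ
  fin_cases i <;> fin_cases j <;>
    simp only [Fin.zero_eta, Fin.mk_one, Fin.isValue, Matrix.cons_val_zero, Matrix.cons_val_one,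
      Matrix.cons_val_fin_one] <;> omega
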